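/- (Expected one-stage cost under a threshold policy.) Let λ > 0, k > 0, P_T > 0, c > 0, β > 0, and set θ = √P_T, α = λθ, γ = 1/k, m = k/((k+1)λ²). Let X have Laplace density p_X(x) = (λ/2)e^{−λ|x|} and let V have Gamma distribution with shape k and scale θ, with X and V independent. Define the estimate X̂ = 0 if |X| ≤ β and X̂ = sgn(X)·((1/α)·(γ/(γ+1))·(α|X| − αβ − α/λ + V) + (γ/(γ+1))·(1/λ) + β) if |X| > β. Then E[c·1{|X| > β} + (X − X̂)²] = 2∫₀^β x²·(λ/2)e^{−λx} dx + (c + m)·e^{−λβ}. -/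

import Mathlib

/-!
Beyond the threshold the estimation error is `± (k (|X| - β) - V / α) / (k + 1)`, so the cost is a
quadratic polynomial in `V` whose coefficients are functions of `X`. By independence its
expectation only involves the first two moments of the Gamma variable `V` and expectations of
functions of `X`. Under the Laplace law `|X|` is exponential with rate `λ`, and memorylessness gives
`E[f (|X| - β); |X| > β] = e^{-λβ} E[f (Z)]` with `Z ~ Exp(λ)`. The moments of both the exponential
and the Gamma law follow from `x ^ n` times a `Γ(a, r)` density being a multiple of the
`Γ(a + n, r)` density.
-/

open MeasureTheory ProbabilityTheory Real Set

section WithDensity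

variable {α : Type*} [MeasurableSpace α] {μ : Measure α} {ρ : α → ℝ}

theorem integral_withDensity_ofReal (hρ : Measurable ρ) (hρ₀ : ∀ x, 0 ≤ ρ x)
    (f : α → ℝ) :
    ∫ x, f x ∂μ.withDensity (fun x => ENNReal.ofReal (ρ x)) = ∫ x, ρ x * f x ∂μ := by
  rw [integral_withDensity_eq_integral_toReal_smul hρ.ennreal_ofReal
    (ae_of_all _ fun _ => ENNReal.ofReal_lt_top)]
  simp only [ENNReal.toReal_ofReal (hρ₀ _), smul_eq_mul]

theorem integrable_withDensity_ofReal_iff (hρ : Measurable ρ) (hρ₀ : ∀ x, 0 ≤ ρ x)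
    {f : α → ℝ} :
    Integrable f (μ.withDensity fun x => ENNReal.ofReal (ρ x)) ↔
      Integrable (fun x => ρ x * f x) μ := by
  rw [integrable_withDensity_iff_integrable_smul' hρ.ennreal_ofReal
    (ae_of_all _ fun _ => ENNReal.ofReal_lt_top)]
  simp only [ENNReal.toReal_ofReal (hρ₀ _), smul_eq_mul]

end WithDensity

namespace ProbabilityTheory

section Gamma

variable {a r : ℝ}

theorem integral_gammaMeasure (ha : 0 < a) (hr : 0 < r) (f : ℝ → ℝ) :
    ∫ x, f x ∂gammaMeasure a r = ∫ x, gammaPDFReal a r x * f x :=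
  integral_withDensity_ofReal (measurable_gammaPDFReal a r) (gammaPDFReal_nonneg ha hr) f

theorem integrable_gammaMeasure_iff (ha : 0 < a) (hr : 0 < r) {f : ℝ → ℝ} :
    Integrable f (gammaMeasure a r) ↔ Integrable fun x => gammaPDFReal a r x * f x :=
  integrable_withDensity_ofReal_iff (measurable_gammaPDFReal a r) (gammaPDFReal_nonneg ha hr)

theorem integral_gammaPDFReal (ha : 0 < a) (hr : 0 < r) : ∫ x, gammaPDFReal a r x = 1 := by
  have := isProbabilityMeasure_gammaMeasure ha hr
  simpa using (integral_gammaMeasure ha hr fun _ => 1).symm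

theorem integrable_gammaPDFReal (ha : 0 < a) (hr : 0 < r) : Integrable (gammaPDFReal a r) := by
  have := isProbabilityMeasure_gammaMeasure ha hr
  simpa using (integrable_gammaMeasure_iff ha hr).1 (integrable_const (1 : ℝ))

theorem pow_mul_gammaPDFReal (ha : 0 < a) (hr : 0 < r) (n : ℕ) {x : ℝ} (hx : x ≠ 0) :
    x ^ n * gammaPDFReal a r x
      = Gamma (a + n) / (Gamma a * r ^ n) * gammaPDFReal (a + n) r x := by
  have hΓ : Gamma (a + n) ≠ 0 := (Gamma_pos_of_pos (by positivity)).ne'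
  have hΓa : Gamma a ≠ 0 := (Gamma_pos_of_pos ha).ne'
  unfold gammaPDFReal
  split_ifs
  · rw [add_sub_right_comm, rpow_add_natCast hx, rpow_add_natCast hr.ne']
    field_simp
  · simp

theorem integrable_pow_gammaMeasure (ha : 0 < a) (hr : 0 < r) (n : ℕ) :
    Integrable (fun x => x ^ n) (gammaMeasure a r) := by
  rw [integrable_gammaMeasure_iff ha hr]
  refine ((integrable_gammaPDFReal (a := a + n) (by positivity) hr).const_mul
    (Gamma (a + n) / (Gamma a * r ^ n))).congr ?_
  filter_upwards [compl_mem_ae_iff.2 (measure_singleton (0 : ℝ))] with x hx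
  rw [mul_comm (gammaPDFReal a r x), pow_mul_gammaPDFReal ha hr n hx, mul_comm]

theorem integral_pow_gammaMeasure (ha : 0 < a) (hr : 0 < r) (n : ℕ) :
    ∫ x, x ^ n ∂gammaMeasure a r = Gamma (a + n) / (Gamma a * r ^ n) := by
  rw [integral_gammaMeasure ha hr, ← mul_one (Gamma (a + n) / _),
    ← integral_gammaPDFReal (a := a + n) (by positivity) hr, ← integral_const_mul]
  refine integral_congr_ae ?_
  filter_upwards [compl_mem_ae_iff.2 (measure_singleton (0 : ℝ))] with x hx
  rw [mul_comm, pow_mul_gammaPDFReal ha hr n hx]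

theorem integral_id_gammaMeasure (ha : 0 < a) (hr : 0 < r) :
    ∫ x, x ∂gammaMeasure a r = a / r := by
  have := integral_pow_gammaMeasure ha hr 1
  simp only [pow_one, Nat.cast_one, Gamma_add_one ha.ne'] at this
  rw [this]
  field_simp [(Gamma_pos_of_pos ha).ne']

theorem integral_sq_gammaMeasure (ha : 0 < a) (hr : 0 < r) :
    ∫ x, x ^ 2 ∂gammaMeasure a r = a * (a + 1) / r ^ 2 := by
  rw [integral_pow_gammaMeasure ha hr 2, Nat.cast_ofNat, show a + 2 = a + 1 + 1 by ring,
    Gamma_add_one (by positivity), Gamma_add_one ha.ne']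
  field_simp [(Gamma_pos_of_pos ha).ne']

end Gamma

section Exponential

variable {r : ℝ}

theorem integral_expMeasure (hr : 0 < r) (f : ℝ → ℝ) :
    ∫ y, f y ∂expMeasure r = ∫ y in Ioi 0, r * exp (-(r * y)) * f y := by
  rw [expMeasure, integral_gammaMeasure one_pos hr, ← integral_Ici_eq_integral_Ioi,
    ← integral_indicator measurableSet_Ici]
  congr with y
  by_cases hy : 0 ≤ y <;> simp [gammaPDFReal, hy]

theorem integrable_expMeasure_iff (hr : 0 < r) {f : ℝ → ℝ} :
    Integrable f (expMeasure r) ↔ IntegrableOn (fun y => r * exp (-(r * y)) * f y) (Ioi 0) := by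
  rw [expMeasure, integrable_gammaMeasure_iff one_pos hr, ← integrableOn_Ici_iff_integrableOn_Ioi,
    ← integrable_indicator_iff measurableSet_Ici]
  refine integrable_congr (ae_of_all _ fun y => ?_)
  by_cases hy : 0 ≤ y <;> simp [gammaPDFReal, hy]

theorem integrable_pow_expMeasure (hr : 0 < r) (n : ℕ) :
    Integrable (fun y => y ^ n) (expMeasure r) :=
  integrable_pow_gammaMeasure one_pos hr n

theorem integral_pow_expMeasure (hr : 0 < r) (n : ℕ) :
    ∫ y, y ^ n ∂expMeasure r = n.factorial / r ^ n := by
  rw [expMeasure, integral_pow_gammaMeasure one_pos hr, add_comm, Gamma_nat_eq_factorial,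
    Gamma_one, one_mul]

theorem integral_id_expMeasure (hr : 0 < r) : ∫ y, y ∂expMeasure r = 1 / r :=
  integral_id_gammaMeasure one_pos hr

/-- Memorylessness, at the level of densities. -/
theorem indicator_Ioi_exp_mul_indicator_Ioi_sub {β : ℝ} (hβ : 0 ≤ β) (f : ℝ → ℝ) (y : ℝ) :
    (Ioi 0).indicator (fun y => r * exp (-(r * y)) * (Ioi β).indicator (fun y => f (y - β)) y) y
      = exp (-(r * β)) * (Ioi 0).indicator (fun z => r * exp (-(r * z)) * f z) (y - β) := by
  by_cases hyβ : β < y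
  · have hy : 0 < y := hβ.trans_lt hyβ
    simp only [indicator_of_mem (mem_Ioi.2 hy), indicator_of_mem (mem_Ioi.2 hyβ),
      indicator_of_mem (mem_Ioi.2 (sub_pos.2 hyβ))]
    rw [show -(r * y) = -(r * β) + -(r * (y - β)) by ring, exp_add]
    ring
  · have hyβ' : y - β ∉ Ioi 0 := by simpa using hyβ
    by_cases hy : 0 < y <;> simp [hy, hyβ, hyβ']

theorem integral_indicator_Ioi_sub_expMeasure (hr : 0 < r) {β : ℝ} (hβ : 0 ≤ β)
    (f : ℝ → ℝ) :
    ∫ y, (Ioi β).indicator (fun y => f (y - β)) y ∂expMeasure r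
      = exp (-(r * β)) * ∫ y, f y ∂expMeasure r := by
  rw [integral_expMeasure hr, integral_expMeasure hr, ← integral_indicator measurableSet_Ioi,
    ← integral_indicator measurableSet_Ioi]
  simp only [indicator_Ioi_exp_mul_indicator_Ioi_sub hβ]
  rw [integral_const_mul, integral_sub_right_eq_self]

theorem _root_.MeasureTheory.Integrable.indicator_Ioi_sub_expMeasure (hr : 0 < r) {β : ℝ}
    (hβ : 0 ≤ β) {f : ℝ → ℝ} (hf : Integrable f (expMeasure r)) :
    Integrable ((Ioi β).indicator fun y => f (y - β)) (expMeasure r) := by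
  rw [integrable_expMeasure_iff hr, ← integrable_indicator_iff measurableSet_Ioi] at hf ⊢
  exact ((hf.comp_sub_right β).const_mul _).congr
    (ae_of_all _ fun y => (indicator_Ioi_exp_mul_indicator_Ioi_sub hβ f y).symm)

end Exponential

section Laplace

variable {lam β : ℝ}

noncomputable def laplaceMeasure (lam : ℝ) : Measure ℝ :=
  volume.withDensity fun x => ENNReal.ofReal (lam / 2 * exp (-lam * |x|))

theorem _root_.MeasureTheory.IntegrableOn.comp_abs {f : ℝ → ℝ} (hf : IntegrableOn f (Ioi 0)) :
    Integrable fun x => f |x| := by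
  have hIoi : IntegrableOn (fun x => f |x|) (Ioi 0) :=
    hf.congr_fun (fun x hx => by rw [abs_of_pos hx]) measurableSet_Ioi
  have hIic : IntegrableOn (fun x => f |x|) (Iic 0) := by
    have hneg : MeasurableEmbedding fun x : ℝ => -x := (Homeomorph.neg ℝ).measurableEmbedding
    rw [← Measure.map_neg_eq_self (volume : Measure ℝ), hneg.integrableOn_map_iff]
    simp_rw [Function.comp_def, abs_neg, neg_preimage, neg_Iic, neg_zero]
    rwa [integrableOn_Ici_iff_integrableOn_Ioi]
  simpa using hIic.union hIoi

theorem integral_comp_abs_laplaceMeasure (hlam : 0 ≤ lam) (g : ℝ → ℝ) :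
    ∫ x, g |x| ∂laplaceMeasure lam = 2 * ∫ y in Ioi 0, lam / 2 * exp (-lam * y) * g y := by
  rw [laplaceMeasure, integral_withDensity_ofReal (by fun_prop) fun x => by positivity]
  exact integral_comp_abs (f := fun y => lam / 2 * exp (-lam * y) * g y)

theorem integral_comp_abs_laplaceMeasure_eq (hlam : 0 < lam) (g : ℝ → ℝ) :
    ∫ x, g |x| ∂laplaceMeasure lam = ∫ y, g y ∂expMeasure lam := by
  rw [integral_comp_abs_laplaceMeasure hlam.le, integral_expMeasure hlam, ← integral_const_mul]
  congr with y
  ring_nf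

theorem _root_.MeasureTheory.Integrable.comp_abs_laplaceMeasure (hlam : 0 < lam) {g : ℝ → ℝ}
    (hg : Integrable g (expMeasure lam)) : Integrable (fun x => g |x|) (laplaceMeasure lam) := by
  rw [integrable_expMeasure_iff hlam] at hg
  rw [laplaceMeasure, integrable_withDensity_ofReal_iff (by fun_prop) fun x => by positivity]
  refine (IntegrableOn.comp_abs (hg.const_mul (1 / 2))).congr (ae_of_all _ fun x => ?_)
  simp only [neg_mul]
  ring

theorem integral_indicator_Iic_abs_laplaceMeasure (hlam : 0 ≤ lam) (hβ : 0 ≤ β) (g : ℝ → ℝ) :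
    ∫ x, (Iic β).indicator g |x| ∂laplaceMeasure lam
      = 2 * ∫ y in (0 : ℝ)..β, g y * (lam / 2 * exp (-lam * y)) := by
  rw [integral_comp_abs_laplaceMeasure hlam, intervalIntegral.integral_of_le hβ]
  simp_rw [← indicator_mul_right _ (fun y => lam / 2 * exp (-lam * y))]
  rw [setIntegral_indicator measurableSet_Iic, Ioi_inter_Iic]
  simp_rw [mul_comm (g _)]

theorem ite_abs_le_eq_indicator (g h : ℝ → ℝ) (x : ℝ) :
    (if |x| ≤ β then g |x| else h (|x| - β))
      = (Iic β).indicator g |x| + (Ioi β).indicator (fun y => h (y - β)) |x| := by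
  by_cases hx : |x| ≤ β
  · simp [hx]
  · simp [hx, not_le.1 hx]

theorem _root_.MeasureTheory.Integrable.ite_abs_le_laplaceMeasure (hlam : 0 < lam)
    (hβ : 0 ≤ β) {g h : ℝ → ℝ} (hg : IntegrableOn g (Iic β) (expMeasure lam))
    (hh : Integrable h (expMeasure lam)) :
    Integrable (fun x => if |x| ≤ β then g |x| else h (|x| - β)) (laplaceMeasure lam) := by
  simp_rw [ite_abs_le_eq_indicator]
  exact (((integrable_indicator_iff measurableSet_Iic).2 hg).comp_abs_laplaceMeasure hlam).add
    ((hh.indicator_Ioi_sub_expMeasure hlam hβ).comp_abs_laplaceMeasure hlam)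

theorem integral_ite_abs_le_laplaceMeasure (hlam : 0 < lam) (hβ : 0 ≤ β) {g h : ℝ → ℝ}
    (hg : IntegrableOn g (Iic β) (expMeasure lam)) (hh : Integrable h (expMeasure lam)) :
    ∫ x, (if |x| ≤ β then g |x| else h (|x| - β)) ∂laplaceMeasure lam
      = 2 * (∫ y in (0 : ℝ)..β, g y * (lam / 2 * exp (-lam * y)))
        + exp (-(lam * β)) * ∫ z, h z ∂expMeasure lam := by
  simp_rw [ite_abs_le_eq_indicator]
  rw [integral_add
      (((integrable_indicator_iff measurableSet_Iic).2 hg).comp_abs_laplaceMeasure hlam)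
      ((hh.indicator_Ioi_sub_expMeasure hlam hβ).comp_abs_laplaceMeasure hlam),
    integral_indicator_Iic_abs_laplaceMeasure hlam.le hβ,
    integral_comp_abs_laplaceMeasure_eq hlam ((Ioi β).indicator fun y => h (y - β)),
    integral_indicator_Ioi_sub_expMeasure hlam hβ]

end Laplace

theorem IndepFun.integral_add_mul_add_mul_sq {Ω : Type*} [MeasurableSpace Ω] {μ : Measure Ω}
    {X V : Ω → ℝ} {μX μV : Measure ℝ} (hXV : IndepFun X V μ) (hX : AEMeasurable X μ)
    (hV : AEMeasurable V μ) (hμX : μ.map X = μX) (hμV : μ.map V = μV) {f₀ f₁ f₂ : ℝ → ℝ}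
    (h₀ : Integrable f₀ μX) (h₁ : Integrable f₁ μX) (h₂ : Integrable f₂ μX)
    (hV₁ : Integrable (fun v => v) μV) (hV₂ : Integrable (fun v => v ^ 2) μV) :
    ∫ ω, f₀ (X ω) + f₁ (X ω) * V ω + f₂ (X ω) * V ω ^ 2 ∂μ
      = ∫ x, f₀ x ∂μX + (∫ x, f₁ x ∂μX) * (∫ v, v ∂μV) + (∫ x, f₂ x ∂μX) * ∫ v, v ^ 2 ∂μV := by
  subst hμX hμV
  have hcomp {Y : Ω → ℝ} {f : ℝ → ℝ} (hY : AEMeasurable Y μ) (hf : Integrable f (μ.map Y)) :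
      Integrable (fun ω => f (Y ω)) μ :=
    (integrable_map_measure hf.1 hY).1 hf
  have hmul {f g : ℝ → ℝ} (hf : Integrable f (μ.map X)) (hg : Integrable g (μ.map V)) :
      Integrable (fun ω => f (X ω) * g (V ω)) μ ∧
        ∫ ω, f (X ω) * g (V ω) ∂μ = (∫ x, f x ∂μ.map X) * ∫ v, g v ∂μ.map V :=
    ⟨(hXV.comp₀ hX hV hf.aemeasurable hg.aemeasurable).integrable_mul (hcomp hX hf)
      (hcomp hV hg),
      by rw [hXV.integral_fun_comp_mul_comp hX hV hf.1 hg.1, integral_map hX hf.1,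
        integral_map hV hg.1]⟩
  obtain ⟨i₁, e₁⟩ := hmul h₁ hV₁
  obtain ⟨i₂, e₂⟩ := hmul h₂ hV₂
  rw [integral_add (f := fun ω => f₀ (X ω) + f₁ (X ω) * V ω) ((hcomp hX h₀).add i₁) i₂,
    integral_add (hcomp hX h₀) i₁, e₁, e₂, integral_map hX h₀.1]

end ProbabilityTheory

theorem sq_sub_sign_mul {x : ℝ} (hx : x ≠ 0) (e : ℝ) :
    (x - sign x * e) ^ 2 = (|x| - e) ^ 2 := by
  rcases hx.lt_or_gt with h | h
  · rw [sign_of_neg h, abs_of_neg h]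
    ring
  · rw [sign_of_pos h, abs_of_pos h]
    ring

/-- Beyond the threshold the estimation error is `± (k (|x| - β) - v / α) / (k + 1)`. -/
theorem threshold_cost_eq {lam k α β c : ℝ} (hk : 0 < k) (hα : α ≠ 0) (hβ : 0 ≤ β)
    (x v : ℝ) :
    (if β < |x| then c else 0) + (x - if |x| ≤ β then 0 else sign x *
        ((1 / α) * ((1 / k) / ((1 / k) + 1)) * (α * |x| - α * β - α / lam + v)
          + ((1 / k) / ((1 / k) + 1)) * (1 / lam) + β)) ^ 2
      = (if |x| ≤ β then |x| ^ 2 else c + (k / (k + 1)) ^ 2 * (|x| - β) ^ 2)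
        + (if |x| ≤ β then 0 else -2 * (k / (k + 1)) * (1 / ((k + 1) * α)) * (|x| - β)) * v
        + (if |x| ≤ β then 0 else (1 / ((k + 1) * α)) ^ 2) * v ^ 2 := by
  by_cases hx : |x| ≤ β
  · simp [hx, not_lt.2 hx, sq_abs]
  · have hxβ : β < |x| := not_le.1 hx
    have hx₀ : x ≠ 0 := abs_pos.1 (hβ.trans_lt hxβ)
    simp only [hx, hxβ, if_true, if_false, sq_sub_sign_mul hx₀]
    field_simp
    ring

theorem threshold_policy_expected_cost_general
    {Ω : Type*} [MeasureSpace Ω] [IsProbabilityMeasure (ℙ : Measure Ω)]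
    (lam k PT c β : ℝ) (hlam : 0 < lam) (hk : 0 < k) (hPT : 0 < PT) (hβ : 0 < β)
    (θ α γ m : ℝ) (hθ : θ = Real.sqrt PT) (hα : α = lam * θ) (hγ : γ = 1 / k)
    (hm : m = k / ((k + 1) * lam ^ 2))
    (X V : Ω → ℝ) (hX : Measurable X) (hV : Measurable V)
    (hXlaw : Measure.map X ℙ
      = volume.withDensity fun x => ENNReal.ofReal (lam / 2 * Real.exp (-lam * |x|)))
    (hVlaw : Measure.map V ℙ = gammaMeasure k θ⁻¹)
    (hindep : IndepFun X V ℙ)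
    (Xhat : Ω → ℝ)
    (hXhat : Xhat = fun w =>
      if |X w| ≤ β then 0
      else Real.sign (X w) * ((1 / α) * (γ / (γ + 1)) * (α * |X w| - α * β - α / lam + V w)
        + (γ / (γ + 1)) * (1 / lam) + β)) :
    (∫ w, ((if β < |X w| then c else 0) + (X w - Xhat w) ^ 2) ∂ℙ)
      = 2 * (∫ x in (0 : ℝ)..β, x ^ 2 * (lam / 2 * Real.exp (-lam * x)))
        + (c + m) * Real.exp (-lam * β) := by
  subst hXhat hγ hm
  have hXlaw : Measure.map X ℙ = laplaceMeasure lam := hXlaw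
  have hθ₀ : 0 < θ := hθ ▸ sqrt_pos.2 hPT
  have hr : 0 < θ⁻¹ := inv_pos.2 hθ₀
  have := isProbabilityMeasure_expMeasure hlam
  have hZ₂ := integrable_pow_expMeasure hlam 2
  have hq : Integrable (fun z => c + (k / (k + 1)) ^ 2 * z ^ 2) (expMeasure lam) :=
    (integrable_const c).add (hZ₂.const_mul _)
  have hl : Integrable (fun z => -2 * (k / (k + 1)) * (1 / ((k + 1) * α)) * z)
      (expMeasure lam) := by
    simpa using (integrable_pow_expMeasure hlam 1).const_mul
      (-2 * (k / (k + 1)) * (1 / ((k + 1) * α)))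
  have hconst := integrable_const (μ := expMeasure lam) ((1 / ((k + 1) * α)) ^ 2)
  rw [integral_congr_ae (ae_of_all _ fun ω =>
      threshold_cost_eq hk (hα ▸ mul_pos hlam hθ₀).ne' hβ.le (X ω) (V ω)),
    hindep.integral_add_mul_add_mul_sq hX.aemeasurable hV.aemeasurable hXlaw hVlaw
      (Integrable.ite_abs_le_laplaceMeasure hlam hβ.le hZ₂.integrableOn hq)
      (Integrable.ite_abs_le_laplaceMeasure hlam hβ.le integrableOn_zero hl)
      (Integrable.ite_abs_le_laplaceMeasure hlam hβ.le integrableOn_zero hconst)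
      (by simpa using integrable_pow_gammaMeasure hk hr 1) (integrable_pow_gammaMeasure hk hr 2),
    integral_ite_abs_le_laplaceMeasure hlam hβ.le hZ₂.integrableOn hq,
    integral_ite_abs_le_laplaceMeasure hlam hβ.le integrableOn_zero hl,
    integral_ite_abs_le_laplaceMeasure hlam hβ.le integrableOn_zero hconst,
    integral_id_gammaMeasure hk hr, integral_sq_gammaMeasure hk hr,
    integral_add (integrable_const c) (hZ₂.const_mul _), integral_const_mul, integral_const_mul,
    integral_pow_expMeasure hlam 2, integral_id_expMeasure hlam]
  simp only [integral_const, probReal_univ, smul_eq_mul, one_mul, zero_mul,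
    intervalIntegral.integral_zero, mul_zero, zero_add, neg_mul, Nat.factorial_two, Nat.cast_ofNat]
  generalize ∫ y in (0 : ℝ)..β, y ^ 2 * (lam / 2 * rexp (-(lam * y))) = I
  subst hα
  field_simp
  ring

/-- **Expected one-stage cost under a threshold policy.** For a Laplace
source `X`, Gamma noise `V` (shape `k`, scale `θ = √P_T`) independent of `X`, `α = λθ`,
`γ = 1/k`, `m = k/((k+1)λ²)`, and the threshold-`β` scheme with estimate `X̂ = 0` when
`|X| ≤ β` and `X̂ = sgn(X)((1/α)(γ/(γ+1))(α|X| - αβ - α/λ + V) + (γ/(γ+1))(1/λ) + β)`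
when `|X| > β`, the expected one-stage cost is
`E[c·1{|X| > β} + (X - X̂)²] = 2∫₀^β x²(λ/2)e^{-λx} dx + (c + m)e^{-λβ}`. -/
theorem threshold_policy_expected_cost
    {Ω : Type*} [MeasureSpace Ω] [IsProbabilityMeasure (ℙ : Measure Ω)]
    (lam k PT c β : ℝ) (hlam : 0 < lam) (hk : 0 < k) (hPT : 0 < PT) (hc : 0 < c) (hβ : 0 < β)
    (θ α γ m : ℝ) (hθ : θ = Real.sqrt PT) (hα : α = lam * θ) (hγ : γ = 1 / k)
    (hm : m = k / ((k + 1) * lam ^ 2))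
    (X V : Ω → ℝ) (hX : Measurable X) (hV : Measurable V)
    (hXlaw : Measure.map X ℙ
      = volume.withDensity fun x => ENNReal.ofReal (lam / 2 * Real.exp (-lam * |x|)))
    (hVlaw : Measure.map V ℙ = gammaMeasure k θ⁻¹)
    (hindep : IndepFun X V ℙ)
    (Xhat : Ω → ℝ)
    (hXhat : Xhat = fun w =>
      if |X w| ≤ β then 0
      else Real.sign (X w) * ((1 / α) * (γ / (γ + 1)) * (α * |X w| - α * β - α / lam + V w)
        + (γ / (γ + 1)) * (1 / lam) + β)) :
    (∫ w, ((if β < |X w| then c else 0) + (X w - Xhat w) ^ 2) ∂ℙ)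
      = 2 * (∫ x in (0 : ℝ)..β, x ^ 2 * (lam / 2 * Real.exp (-lam * x)))
        + (c + m) * Real.exp (-lam * β) :=
  threshold_policy_expected_cost_general lam k PT c β hlam hk hPT hβ θ α γ m hθ hα hγ hm X V hX hV
    hXlaw hVlaw hindep Xhat hXhat
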